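/- arXiv:2311.01261 — 3 statements merged into one kernel-verified Lean document; each statement's English description precedes it below -/
import Mathlib

section
/- Let $\lambda, \mu > 0$ and let $k$ be a positive integer. Then the five-dimensional integral $\int_{\mathbb{R}_+^5} \mathbf{1}\{z_1 - z_5 > x\}\,\mathbf{1}\{z_3 > x\}\,\mathbf{1}\{z_4 > y\}\,\mathbf{1}\{z_1 + z_2 - z_5 - z_3 > y\}\,\mathbf{1}\{z_5 + z_3 > z_1\}\, \frac{\lambda^k z_5^{k-1}}{\Gamma(k)} e^{-\lambda z_5} \mu^4 e^{-\mu(z_1+z_2+z_3+z_4)}\, dz_1\,dz_2\,dz_3\,dz_4\,dz_5$ equals $\frac{e^{-2\mu(x+y)}}{4}\left(\frac{\lambda}{\lambda+\mu}\right)^k$ for all $x, y \geq 0$. -/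
/-!
Swapping the two innermost integrals, `z1` ranges over `(x + z5, z5 + z3)`, an interval of
length `(z3 - x)⁺`, and `z2` over an exponential tail beyond `y + z5 + z3 - z1`, whose mass
`e^{-μ (y + z5 + z3 - z1)} / μ` cancels the `z1`-dependence. What is left splits into one factor
in each of `z3`, `z4`, `z5`. The `z5`-factor is the Laplace transform of the Gamma(k, λ) density
at `μ`, i.e. `(λ / (λ + μ))^k`; the other two are elementary exponential integrals.
-/

open MeasureTheory Real Set

theorem setIntegral_Ioi_indicator_Ioi {a b : ℝ} (hab : a ≤ b) (f : ℝ → ℝ) :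
    ∫ t in Ioi a, (Ioi b).indicator f t = ∫ t in Ioi b, f t := by
  rw [setIntegral_indicator measurableSet_Ioi, inter_eq_right.mpr (Ioi_subset_Ioi hab)]

theorem integral_exp_neg_mul_Ioi {c : ℝ} (hc : 0 < c) (b : ℝ) :
    ∫ t in Ioi b, exp (-(c * t)) = exp (-(c * b)) / c := by
  simpa [neg_mul, neg_div_neg_eq] using integral_exp_mul_Ioi (neg_lt_zero.mpr hc) b

theorem integral_pow_mul_exp_neg_mul_Ioi {r : ℝ} (hr : 0 < r) (n : ℕ) :
    ∫ t in Ioi 0, t ^ n * exp (-(r * t)) = Gamma (n + 1) / r ^ (n + 1) := by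
  have h := integral_rpow_mul_exp_neg_mul_Ioi (a := n + 1) (by positivity) hr
  rw [add_sub_cancel_right, ← Nat.cast_succ, rpow_natCast, one_div, inv_pow, Nat.cast_succ] at h
  simp_rw [rpow_natCast] at h
  rw [h, div_eq_inv_mul]

theorem integral_Ioi_sub_mul_exp_neg_mul {c : ℝ} (hc : 0 < c) (b : ℝ) :
    ∫ t in Ioi b, (t - b) * exp (-(c * t)) = exp (-(c * b)) / c ^ 2 := by
  have shift := (measurePreserving_add_right volume b).setIntegral_preimage_emb
    (measurableEmbedding_addRight b) (fun t => (t - b) * exp (-(c * t))) (Ioi b)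
  simp only [preimage_add_const_Ioi, sub_self, add_sub_cancel_right] at shift
  have split : ∀ s : ℝ,
      s * exp (-(c * (s + b))) = exp (-(c * b)) * (s ^ 1 * exp (-(c * s))) := by
    intro s
    rw [pow_one, mul_left_comm, ← exp_add]
    ring_nf
  simp_rw [← shift, split, integral_const_mul, integral_pow_mul_exp_neg_mul_Ioi hc]
  norm_num [div_eq_mul_inv]

theorem integral_max_sub_zero_mul_exp_neg_mul {b c : ℝ} (hb : 0 ≤ b) (hc : 0 < c) :
    ∫ t in Ioi 0, max (t - b) 0 * exp (-(c * t)) = exp (-(c * b)) / c ^ 2 := by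
  have h : ∀ t, max (t - b) 0 * exp (-(c * t))
      = (Ioi b).indicator (fun t => (t - b) * exp (-(c * t))) t := by
    intro t
    by_cases hbt : b < t
    · simp [hbt, hbt.le]
    · simp [hbt, not_lt.mp hbt]
  simp_rw [h, setIntegral_Ioi_indicator_Ioi hb, integral_Ioi_sub_mul_exp_neg_mul hc]

theorem integral_gamma_density_mul_exp_neg {lam mu : ℝ} (hlm : 0 < lam + mu) (k : ℕ)
    (hk : 1 ≤ k) :
    ∫ t in Ioi 0, lam ^ k * t ^ (k - 1) / Gamma k * exp (-(lam * t)) * exp (-(mu * t)) =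
      (lam / (lam + mu)) ^ k := by
  obtain ⟨n, rfl⟩ : ∃ n, k = n + 1 := ⟨k - 1, by omega⟩
  have h : ∀ t, lam ^ (n + 1) * t ^ (n + 1 - 1) / Gamma ↑(n + 1) * exp (-(lam * t)) *
      exp (-(mu * t)) = lam ^ (n + 1) / Gamma (n + 1) * (t ^ n * exp (-((lam + mu) * t))) := by
    intro t
    rw [mul_assoc _ (exp _), ← exp_add, Nat.add_sub_cancel, Nat.cast_succ]
    ring_nf
  have hΓ : Gamma (n + 1) ≠ 0 := (Gamma_pos_of_pos (by positivity)).ne'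
  simp_rw [h, integral_const_mul, integral_pow_mul_exp_neg_mul_Ioi hlm, div_pow]
  field_simp

theorem integral_ite_exp_neg_eq_indicator {a b c mu t : ℝ} (hmu : 0 < mu) (hbc : b ≤ c) :
    ∫ s in Ioi 0, (if a < t ∧ t < b ∧ c < t + s then exp (-(mu * (t + s))) else 0) =
      (Ioo a b).indicator (fun _ => exp (-(mu * c)) / mu) t := by
  by_cases hab : a < t ∧ t < b
  · have hct : 0 ≤ c - t := by linarith [hab.2]
    have hs : ∀ s, (if a < t ∧ t < b ∧ c < t + s then exp (-(mu * (t + s))) else 0) =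
        exp (-(mu * t)) * (Ioi (c - t)).indicator (fun s => exp (-(mu * s))) s := by
      intro s
      by_cases hcs : c - t < s
      · simp only [hab, true_and, indicator_of_mem (mem_Ioi.mpr hcs), ← exp_add,
          if_pos (by linarith : c < t + s)]
        ring_nf
      · simp only [hab, true_and, indicator_of_notMem (notMem_Ioi.mpr (not_lt.mp hcs)),
          if_neg (by linarith : ¬ c < t + s), mul_zero]
    simp_rw [hs, integral_const_mul, setIntegral_Ioi_indicator_Ioi hct,
      integral_exp_neg_mul_Ioi hmu, indicator_of_mem (mem_Ioo.mpr hab), mul_div_assoc',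
      ← exp_add]
    ring_nf
  · have hs : ∀ s, (if a < t ∧ t < b ∧ c < t + s then exp (-(mu * (t + s))) else 0) = 0 :=
      fun s => if_neg fun h => hab ⟨h.1, h.2.1⟩
    simp_rw [hs, integral_zero, indicator_of_notMem (show t ∉ Ioo a b from hab)]

theorem integral_integral_ite_exp_neg {a b c mu : ℝ} (hmu : 0 < mu) (ha : 0 ≤ a)
    (hbc : b ≤ c) :
    ∫ s in Ioi 0, ∫ t in Ioi 0,
        (if a < t ∧ t < b ∧ c < t + s then exp (-(mu * (t + s))) else 0) =
      max (b - a) 0 * (exp (-(mu * c)) / mu) := by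
  have hexp : IntegrableOn (fun t => exp (-(mu * t))) (Ioi 0) := by
    simpa only [neg_mul] using exp_neg_integrableOn_Ioi 0 hmu
  have hf : Integrable
      (Function.uncurry fun s t =>
        if a < t ∧ t < b ∧ c < t + s then exp (-(mu * (t + s))) else 0)
      ((volume.restrict (Ioi 0)).prod (volume.restrict (Ioi 0))) := by
    refine (hexp.mul_prod hexp).mono' ?_ (Filter.Eventually.of_forall fun p => ?_)
    · refine (Measurable.ite ?_ (by fun_prop) measurable_const).aestronglyMeasurable
      measurability
    · simp only [Function.uncurry]
      split_ifs
      · rw [norm_of_nonneg (exp_pos _).le, ← exp_add]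
        exact le_of_eq (by ring_nf)
      · simp only [norm_zero]
        positivity
  rw [integral_integral_swap hf, setIntegral_congr_fun measurableSet_Ioi
      fun t _ => integral_ite_exp_neg_eq_indicator hmu hbc,
    setIntegral_indicator measurableSet_Ioo,
    inter_eq_right.mpr (show Ioo a b ⊆ Ioi 0 from fun t ht => ha.trans_lt ht.1),
    setIntegral_const, volume_real_Ioo, smul_eq_mul]

theorem integral_integral_tandem_integrand {mu x y z3 z4 z5 : ℝ} (hmu : 0 < mu) (hx : 0 ≤ x)
    (hy : 0 ≤ y) (hz5 : 0 ≤ z5) (C : ℝ) :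
    ∫ z2 in Ioi 0, ∫ z1 in Ioi 0,
        (if z1 - z5 > x ∧ z3 > x ∧ z4 > y ∧ z1 + z2 - z5 - z3 > y ∧ z5 + z3 > z1 then
          C * exp (-(mu * (z1 + z2 + z3 + z4)))
        else 0) =
      C * exp (-(mu * z5)) * (exp (-(mu * y)) / mu *
        ((Ioi y).indicator (fun t => exp (-(mu * t))) z4 *
          (max (z3 - x) 0 * exp (-(2 * mu * z3))))) := by
  set I := (Ioi y).indicator (fun t => exp (-(mu * t))) z4
  -- `z3 > x` is implied by `x < z1 - z5` and `z1 < z5 + z3`, so only `z4 > y` factors out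
  have factor : ∀ z2 z1,
      (if z1 - z5 > x ∧ z3 > x ∧ z4 > y ∧ z1 + z2 - z5 - z3 > y ∧ z5 + z3 > z1 then
        C * exp (-(mu * (z1 + z2 + z3 + z4))) else 0) =
      C * I * exp (-(mu * z3)) * (if x + z5 < z1 ∧ z1 < z5 + z3 ∧ y + z5 + z3 < z1 + z2 then
        exp (-(mu * (z1 + z2))) else 0) := by
    intro z2 z1
    by_cases hz4 : y < z4
    · simp only [I, indicator_of_mem (mem_Ioi.mpr hz4)]
      split_ifs with h h' h'
      · rw [mul_assoc C, mul_assoc C, mul_assoc, ← exp_add, ← exp_add]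
        ring_nf
      · exact absurd ⟨by linarith, by linarith, by linarith⟩ h'
      · exact absurd ⟨by linarith, by linarith, hz4, by linarith, by linarith⟩ h
      · rw [mul_zero]
    · simp only [I, indicator_of_notMem (notMem_Ioi.mpr (not_lt.mp hz4)), mul_zero, zero_mul]
      exact if_neg fun h => hz4 h.2.2.1
  have hexp : exp (-(mu * z3)) * exp (-(mu * (y + z5 + z3))) =
      exp (-(mu * z5)) * exp (-(mu * y)) * exp (-(2 * mu * z3)) := by
    simp only [← exp_add]
    ring_nf
  simp_rw [factor, integral_const_mul]
  rw [integral_integral_ite_exp_neg hmu (by linarith) (by linarith),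
    show z5 + z3 - (x + z5) = z3 - x by ring]
  linear_combination C * I * max (z3 - x) 0 / mu * hexp

theorem tandem_joint_first_term (lam mu : ℝ) (hlam : 0 < lam) (hmu : 0 < mu)
    (k : ℕ) (hk : 1 ≤ k) (x y : ℝ) (hx : 0 ≤ x) (hy : 0 ≤ y) :
    (∫ z5 in Set.Ioi (0:ℝ), ∫ z4 in Set.Ioi (0:ℝ), ∫ z3 in Set.Ioi (0:ℝ),
      ∫ z2 in Set.Ioi (0:ℝ), ∫ z1 in Set.Ioi (0:ℝ),
        (if z1 - z5 > x ∧ z3 > x ∧ z4 > y ∧ z1 + z2 - z5 - z3 > y ∧ z5 + z3 > z1 then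
          lam ^ k * z5 ^ (k - 1) / Real.Gamma k * Real.exp (-(lam * z5)) *
            mu ^ 4 * Real.exp (-(mu * (z1 + z2 + z3 + z4)))
        else 0)) =
      Real.exp (-(2 * mu * (x + y))) / 4 * (lam / (lam + mu)) ^ k := by
  calc _ = ∫ z5 in Ioi 0, lam ^ k * z5 ^ (k - 1) / Gamma k * exp (-(lam * z5)) *
          exp (-(mu * z5)) * (mu ^ 4 * (exp (-(mu * y)) / mu *
            ((∫ t in Ioi 0, (Ioi y).indicator (fun t => exp (-(mu * t))) t) *
              ∫ t in Ioi 0, max (t - x) 0 * exp (-(2 * mu * t))))) := by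
        refine setIntegral_congr_fun measurableSet_Ioi fun z5 hz5 => ?_
        simp_rw [integral_integral_tandem_integrand hmu hx hy (le_of_lt hz5), integral_const_mul,
          integral_mul_const]
        ring
    _ = (lam / (lam + mu)) ^ k * (mu ^ 4 * (exp (-(mu * y)) / mu *
          (exp (-(mu * y)) / mu * (exp (-(2 * mu * x)) / (2 * mu) ^ 2)))) := by
        rw [integral_mul_const, integral_gamma_density_mul_exp_neg (by positivity) k hk,
          setIntegral_Ioi_indicator_Ioi hy, integral_exp_neg_mul_Ioi hmu,
          integral_max_sub_zero_mul_exp_neg_mul hx (by positivity)]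
    _ = _ := by
        have hexp : exp (-(mu * y)) * exp (-(mu * y)) * exp (-(2 * mu * x)) =
            exp (-(2 * mu * (x + y))) := by
          simp only [← exp_add]
          ring_nf
        rw [← hexp]
        field_simp
        ring
end

section
/- In the $(M/M/\infty)^2$ tandem queue with Poisson($\lambda$) arrivals and i.i.d. exponential($\mu$) service times at both stations, the joint tail distribution of the overlap times of customers $n$ and $n+k$ satisfies $\mathbb{P}(O^{(1)}_{n,n+k} > x, O^{(2)}_{n,n+k} > y) = \frac{e^{-2\mu(x+y)}}{2}\left(\frac{\lambda}{\lambda+\mu}\right)^k$ for all $x, y \geq 0$. -/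
open MeasureTheory ProbabilityTheory Real

variable {Ω : Type*}

/-- Arrival time of customer `n`: the sum of the first `n` inter-arrival times. -/
noncomputable def arrivalTime (τ : ℕ → Ω → ℝ) (n : ℕ) (ω : Ω) : ℝ :=
  ∑ i ∈ Finset.range n, τ i ω

/-- Departure time of customer `n` from station 1. -/
noncomputable def dep1 (τ S1 : ℕ → Ω → ℝ) (n : ℕ) (ω : Ω) : ℝ :=
  arrivalTime τ n ω + S1 n ω

/-- Departure time of customer `n` from station 2. -/
noncomputable def dep2 (τ S1 S2 : ℕ → Ω → ℝ) (n : ℕ) (ω : Ω) : ℝ :=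
  dep1 τ S1 n ω + S2 n ω

/-- Overlap time of customers `a` and `b` at station 1. -/
noncomputable def ovl1 (τ S1 : ℕ → Ω → ℝ) (a b : ℕ) (ω : Ω) : ℝ :=
  max 0 (min (dep1 τ S1 a ω) (dep1 τ S1 b ω) - max (arrivalTime τ a ω) (arrivalTime τ b ω))

/-- Overlap time of customers `a` and `b` at station 2. -/
noncomputable def ovl2 (τ S1 S2 : ℕ → Ω → ℝ) (a b : ℕ) (ω : Ω) : ℝ :=
  max 0 (min (dep2 τ S1 S2 a ω) (dep2 τ S1 S2 b ω) - max (dep1 τ S1 a ω) (dep1 τ S1 b ω))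

open Set
open scoped ENNReal

/-!
Let `t = A_{n+k} - A_n`, a sum of `k` independent `Exp(λ)` variables, and let `a, b` and `c, d`
be the service times of customers `n, n + k` at stations 1 and 2. Given `t`, memorylessness of
`a` (past `t + x`), of `b` (past `x`) and of `c, d` (past `y`) reduces the joint tail to
`e^{-μ(t + 2x + 2y)} E[e^{-μ|a - b|}] = e^{-μt} e^{-2μ(x + y)} / 2`, and `E[e^{-μt}] = (λ/(λ+μ))^k`.
-/

namespace ProbabilityTheory

lemma expMeasure_eq_withDensity (c : ℝ) : expMeasure c = volume.withDensity (exponentialPDF c) :=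
  rfl

lemma measurable_exponentialPDF (c : ℝ) : Measurable (exponentialPDF c) :=
  (measurable_exponentialPDFReal c).ennreal_ofReal

lemma ae_nonneg_expMeasure (c : ℝ) : ∀ᵐ u ∂expMeasure c, 0 ≤ u := by
  rw [expMeasure_eq_withDensity, ae_withDensity_iff (measurable_exponentialPDF c)]
  exact ae_of_all _ fun u hu => not_lt.1 fun hneg => hu (exponentialPDF_of_neg hneg)

lemma setLIntegral_Ioi_expMeasure (c : ℝ) {r : ℝ} (hr : 0 ≤ r) {f : ℝ → ℝ≥0∞}
    (hf : Measurable f) :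
    ∫⁻ u in Ioi r, f u ∂expMeasure c
      = ENNReal.ofReal (exp (-(c * r))) * ∫⁻ u, f (u + r) ∂expMeasure c := by
  have hpdf : ∀ u ∈ Ici (0 : ℝ), exponentialPDF c (u + r) * f (u + r)
      = ENNReal.ofReal (exp (-(c * r))) * (exponentialPDF c u * f (u + r)) := by
    intro u hu
    rw [exponentialPDF_of_nonneg (add_nonneg hu hr), exponentialPDF_of_nonneg hu, ← mul_assoc,
      ← ENNReal.ofReal_mul (exp_nonneg _), mul_left_comm, ← exp_add]
    ring_nf
  have hsupp : (fun u => exponentialPDF c u * f (u + r)).support ⊆ Ici 0 := fun u hu =>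
    mem_Ici.2 <| not_lt.1 fun hneg => hu (by simp [exponentialPDF_of_neg hneg])
  rw [expMeasure_eq_withDensity, restrict_withDensity measurableSet_Ioi,
    lintegral_withDensity_eq_lintegral_mul _ (measurable_exponentialPDF c) hf,
    lintegral_withDensity_eq_lintegral_mul _ (g := fun u => f (u + r))
      (measurable_exponentialPDF c) (hf.comp (measurable_add_const r))]
  simp only [Pi.mul_apply]
  rw [← setLIntegral_eq_of_support_subset hsupp, ← lintegral_const_mul' _ _ ENNReal.ofReal_ne_top,
    ← setLIntegral_congr_fun measurableSet_Ici hpdf]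
  have hpre : (· + r) ⁻¹' Ici r = Ici (0 : ℝ) := by ext u; simp
  rw [← hpre, Measure.restrict_congr_set Ioi_ae_eq_Ici]
  exact ((measurePreserving_add_right volume r).setLIntegral_comp_preimage_emb
    (measurableEmbedding_addRight r) _ _).symm

lemma expMeasure_Ioi {c : ℝ} (hc : 0 < c) {r : ℝ} (hr : 0 ≤ r) :
    expMeasure c (Ioi r) = ENNReal.ofReal (exp (-(c * r))) := by
  have := isProbabilityMeasure_expMeasure hc
  simpa using setLIntegral_Ioi_expMeasure c hr (f := fun _ => 1) measurable_const

lemma lintegral_rpow_mul_exp_neg_mul_expMeasure {a c s : ℝ} (ha : 0 < a) (hc : 0 < c)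
    (hs : 0 ≤ s) :
    ∫⁻ u, ENNReal.ofReal (u ^ (a - 1) * exp (-(s * u))) ∂expMeasure c
      = ENNReal.ofReal (c * Gamma a / (c + s) ^ a) := by
  have hcs : 0 < c + s := by linarith
  have hdens : ∀ u, exponentialPDF c u * ENNReal.ofReal (u ^ (a - 1) * exp (-(s * u)))
      = ENNReal.ofReal (c * Gamma a / (c + s) ^ a) * gammaPDF a (c + s) u := by
    intro u
    rcases lt_or_ge u 0 with hu | hu
    · simp [exponentialPDF_of_neg hu, gammaPDF_of_neg hu]
    rw [exponentialPDF_of_nonneg hu, gammaPDF_of_nonneg hu,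
      ← ENNReal.ofReal_mul (by positivity), ← ENNReal.ofReal_mul (by positivity)]
    congr 1
    have hΓ : Gamma a ≠ 0 := (Gamma_pos_of_pos ha).ne'
    have hpow : (c + s) ^ a ≠ 0 := (rpow_pos_of_pos hcs a).ne'
    have hexp : exp (-((c + s) * u)) = exp (-(c * u)) * exp (-(s * u)) := by
      rw [← exp_add]; ring_nf
    rw [hexp]
    field_simp
  rw [expMeasure_eq_withDensity, lintegral_withDensity_eq_lintegral_mul _
    (measurable_exponentialPDF c) (by fun_prop)]
  simp only [Pi.mul_apply, hdens]
  rw [lintegral_const_mul' _ _ ENNReal.ofReal_ne_top, lintegral_gammaPDF_eq_one ha hcs, mul_one]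

lemma lintegral_exp_neg_mul_expMeasure {c s : ℝ} (hc : 0 < c) (hs : 0 ≤ s) :
    ∫⁻ u, ENNReal.ofReal (exp (-(s * u))) ∂expMeasure c = ENNReal.ofReal (c / (c + s)) := by
  simpa using lintegral_rpow_mul_exp_neg_mul_expMeasure one_pos hc hs

lemma lintegral_mul_exp_neg_mul_expMeasure {c s : ℝ} (hc : 0 < c) (hs : 0 ≤ s) :
    ∫⁻ u, ENNReal.ofReal (u * exp (-(s * u))) ∂expMeasure c
      = ENNReal.ofReal (c / (c + s) ^ 2) := by
  have h := lintegral_rpow_mul_exp_neg_mul_expMeasure two_pos hc hs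
  norm_num [Gamma_two] at h
  exact_mod_cast h

lemma lintegral_exp_neg_mul_sum_pi_expMeasure {ι : Type*} [Fintype ι] {c s : ℝ} (hc : 0 < c)
    (hs : 0 ≤ s) :
    ∫⁻ w, ENNReal.ofReal (exp (-(s * ∑ i, w i))) ∂Measure.pi (fun _ : ι => expMeasure c)
      = ENNReal.ofReal (c / (c + s)) ^ Fintype.card ι := by
  have := isProbabilityMeasure_expMeasure hc
  have hindep : iIndepFun (fun i (w : ι → ℝ) => ENNReal.ofReal (exp (-(s * w i))))
      (Measure.pi fun _ : ι => expMeasure c) :=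
    iIndepFun_pi (X := fun _ u => ENNReal.ofReal (exp (-(s * u)))) fun _ => by fun_prop
  calc ∫⁻ w, ENNReal.ofReal (exp (-(s * ∑ i, w i))) ∂Measure.pi (fun _ : ι => expMeasure c)
      = ∫⁻ w, ∏ i, ENNReal.ofReal (exp (-(s * w i))) ∂Measure.pi (fun _ : ι => expMeasure c) := by
        simp_rw [Finset.mul_sum, ← Finset.sum_neg_distrib, exp_sum,
          ENNReal.ofReal_prod_of_nonneg fun i _ => (exp_nonneg _)]
    _ = ∏ i, ∫⁻ w, ENNReal.ofReal (exp (-(s * w i))) ∂Measure.pi (fun _ : ι => expMeasure c) :=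
        lintegral_prod_eq_prod_lintegral_of_indepFun _ _ hindep fun _ => by fun_prop
    _ = ENNReal.ofReal (c / (c + s)) ^ Fintype.card ι := by
        simp_rw [(measurePreserving_eval (fun _ : ι => expMeasure c) _).lintegral_comp
          (f := fun u => ENNReal.ofReal (exp (-(s * u)))) (by fun_prop),
          lintegral_exp_neg_mul_expMeasure hc hs, Finset.prod_const, Finset.card_univ]

lemma ae_sum_nonneg_pi_expMeasure {ι : Type*} [Fintype ι] {c : ℝ} (hc : 0 < c) :
    ∀ᵐ w ∂Measure.pi (fun _ : ι => expMeasure c), 0 ≤ ∑ i, w i := by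
  have := isProbabilityMeasure_expMeasure hc
  exact (ae_all_iff.2 fun i : ι => (Measure.tendsto_eval_ae_ae (i := i)).eventually
    (ae_nonneg_expMeasure c)).mono fun w hw => Finset.sum_nonneg fun i _ => hw i

lemma setLIntegral_Iic_exp_neg_abs_sub_expMeasure {c : ℝ} (hc : 0 ≤ c) (a : ℝ) :
    ∫⁻ b in Iic a, ENNReal.ofReal (exp (-(c * |a - b|))) ∂expMeasure c
      = ENNReal.ofReal (c * a * exp (-(c * a))) := by
  have hdens : ∀ b ∈ Iic a, exponentialPDF c b * ENNReal.ofReal (exp (-(c * |a - b|)))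
      = (Ici 0).indicator (fun _ => ENNReal.ofReal (c * exp (-(c * a)))) b := by
    intro b hb
    rcases lt_or_ge b 0 with hb0 | hb0
    · simp [exponentialPDF_of_neg hb0, hb0]
    rw [indicator_of_mem (mem_Ici.2 hb0), exponentialPDF_of_nonneg hb0,
      abs_of_nonneg (sub_nonneg.2 (mem_Iic.1 hb)), ← ENNReal.ofReal_mul (by positivity),
      mul_assoc, ← exp_add]
    ring_nf
  rw [expMeasure_eq_withDensity, setLIntegral_withDensity_eq_setLIntegral_mul _
    (measurable_exponentialPDF c) (by fun_prop) measurableSet_Iic]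
  simp only [Pi.mul_apply]
  rw [setLIntegral_congr_fun measurableSet_Iic hdens, lintegral_indicator_const measurableSet_Ici,
    Measure.restrict_apply measurableSet_Ici, Ici_inter_Iic, Real.volume_Icc, sub_zero,
    ← ENNReal.ofReal_mul (by positivity)]
  ring_nf

lemma lintegral_exp_neg_abs_sub_expMeasure {c : ℝ} (hc : 0 < c) {a : ℝ} (ha : 0 ≤ a) :
    ∫⁻ b, ENNReal.ofReal (exp (-(c * |a - b|))) ∂expMeasure c
      = ENNReal.ofReal ((c * a + 2⁻¹) * exp (-(c * a))) := by
  have htail : ∫⁻ b, ENNReal.ofReal (exp (-(c * |a - (b + a)|))) ∂expMeasure c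
      = ENNReal.ofReal 2⁻¹ := by
    rw [lintegral_congr_ae ((ae_nonneg_expMeasure c).mono fun b hb => by
      rw [sub_add_cancel_right, abs_neg, abs_of_nonneg hb]),
      lintegral_exp_neg_mul_expMeasure hc hc.le]
    congr 1
    field_simp
    ring
  rw [← lintegral_add_compl _ measurableSet_Iic, compl_Iic,
    setLIntegral_Iic_exp_neg_abs_sub_expMeasure hc.le, setLIntegral_Ioi_expMeasure c ha
      (by fun_prop), htail, ← ENNReal.ofReal_mul (exp_nonneg _),
    ← ENNReal.ofReal_add (by positivity) (by positivity)]
  ring_nf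

lemma lintegral_lintegral_exp_neg_abs_sub_expMeasure {c : ℝ} (hc : 0 < c) :
    ∫⁻ a, ∫⁻ b, ENNReal.ofReal (exp (-(c * |a - b|))) ∂expMeasure c ∂expMeasure c = 2⁻¹ := by
  have hsplit : ∀ a, 0 ≤ a → ∫⁻ b, ENNReal.ofReal (exp (-(c * |a - b|))) ∂expMeasure c
      = ENNReal.ofReal c * ENNReal.ofReal (a * exp (-(c * a)))
        + ENNReal.ofReal 2⁻¹ * ENNReal.ofReal (exp (-(c * a))) := by
    intro a ha
    rw [lintegral_exp_neg_abs_sub_expMeasure hc ha, ← ENNReal.ofReal_mul hc.le,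
      ← ENNReal.ofReal_mul (by norm_num), ← ENNReal.ofReal_add (by positivity) (by positivity)]
    ring_nf
  rw [lintegral_congr_ae ((ae_nonneg_expMeasure c).mono hsplit), lintegral_add_left
    (by fun_prop), lintegral_const_mul' _ _ ENNReal.ofReal_ne_top, lintegral_const_mul' _ _
    ENNReal.ofReal_ne_top, lintegral_mul_exp_neg_mul_expMeasure hc hc.le,
    lintegral_exp_neg_mul_expMeasure hc hc.le, ← ENNReal.ofReal_mul hc.le,
    ← ENNReal.ofReal_mul (by norm_num), ← ENNReal.ofReal_add (by positivity) (by positivity)]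
  have hval : c * (c / (c + c) ^ 2) + 2⁻¹ * (c / (c + c)) = 2⁻¹ := by
    field_simp
    ring
  rw [hval, ENNReal.ofReal_inv_of_pos two_pos, ENNReal.ofReal_ofNat]

end ProbabilityTheory

def overlapLength (s₁ e₁ s₂ e₂ : ℝ) : ℝ :=
  max 0 (min e₁ e₂ - max s₁ s₂)

lemma overlapLength_add_left (h s₁ e₁ s₂ e₂ : ℝ) :
    overlapLength (h + s₁) (h + e₁) (h + s₂) (h + e₂) = overlapLength s₁ e₁ s₂ e₂ := by
  simp only [overlapLength, min_add_add_left, max_add_add_left, add_sub_add_left_eq_sub]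

lemma lt_overlapLength_iff {x : ℝ} (hx : 0 ≤ x) {s₁ e₁ s₂ e₂ : ℝ} :
    x < overlapLength s₁ e₁ s₂ e₂ ↔ max s₁ s₂ + x < e₁ ∧ max s₁ s₂ + x < e₂ := by
  rw [overlapLength, lt_max_iff, or_iff_right hx.not_gt, lt_sub_iff_add_lt', lt_min_iff]

/-- Overlap times at the two stations of customers arriving at times `0` and `t`; `q.1` holds their
service times at station 1 and `q.2` those at station 2. -/
def tandemOverlaps (t : ℝ) (q : (ℝ × ℝ) × (ℝ × ℝ)) : ℝ × ℝ :=
  (overlapLength 0 q.1.1 t (t + q.1.2),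
    overlapLength q.1.1 (q.1.1 + q.2.1) (t + q.1.2) (t + q.1.2 + q.2.2))

lemma measurableSet_tandemOverlaps_tail (x y : ℝ) :
    MeasurableSet {p : ℝ × (ℝ × ℝ) × (ℝ × ℝ) |
      x < (tandemOverlaps p.1 p.2).1 ∧ y < (tandemOverlaps p.1 p.2).2} := by
  have hcont : Continuous fun p : ℝ × (ℝ × ℝ) × (ℝ × ℝ) => tandemOverlaps p.1 p.2 := by
    unfold tandemOverlaps overlapLength
    fun_prop
  exact (measurableSet_lt measurable_const hcont.fst.measurable).inter
    (measurableSet_lt measurable_const hcont.snd.measurable)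

lemma expMeasure_prod_preimage_tandemOverlaps {μ t x y : ℝ} (hμ : 0 < μ) (ht : 0 ≤ t)
    (hx : 0 ≤ x) (hy : 0 ≤ y) (p : ℝ × ℝ) :
    ((expMeasure μ).prod (expMeasure μ))
        (Prod.mk p ⁻¹' {q | x < (tandemOverlaps t q).1 ∧ y < (tandemOverlaps t q).2})
      = (Ioi (t + x) ×ˢ Ioi x).indicator
          (fun p => ENNReal.ofReal (exp (-(μ * (|p.1 - (t + p.2)| + 2 * y))))) p := by
  have := isProbabilityMeasure_expMeasure hμ
  obtain ⟨a, b⟩ := p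
  have hmem : ∀ c d, (x < (tandemOverlaps t ((a, b), (c, d))).1
      ∧ y < (tandemOverlaps t ((a, b), (c, d))).2) ↔ (t + x < a ∧ x < b)
        ∧ (max a (t + b) - a + y < c ∧ max a (t + b) - (t + b) + y < d) := by
    intro c d
    simp only [tandemOverlaps, lt_overlapLength_iff hx, lt_overlapLength_iff hy, max_eq_right ht]
    constructor
    · rintro ⟨⟨h₁, h₂⟩, h₃, h₄⟩
      exact ⟨⟨h₁, by linarith⟩, by linarith, by linarith⟩
    · rintro ⟨⟨h₁, h₂⟩, h₃, h₄⟩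
      exact ⟨⟨h₁, by linarith⟩, by linarith, by linarith⟩
  by_cases hab : t + x < a ∧ x < b
  · have hrect : Prod.mk (a, b) ⁻¹' {q | x < (tandemOverlaps t q).1 ∧ y < (tandemOverlaps t q).2}
        = Ioi (max a (t + b) - a + y) ×ˢ Ioi (max a (t + b) - (t + b) + y) := by
      ext ⟨c, d⟩
      simpa [hab] using hmem c d
    rw [hrect, Measure.prod_prod, expMeasure_Ioi hμ (by linarith [le_max_left a (t + b)]),
      expMeasure_Ioi hμ (by linarith [le_max_right a (t + b)]),
      indicator_of_mem (show (a, b) ∈ Ioi (t + x) ×ˢ Ioi x from hab),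
      ← ENNReal.ofReal_mul (exp_nonneg _), ← exp_add, ← max_sub_min_eq_abs']
    congr 2
    linear_combination -μ * min_add_max a (t + b)
  · have hempty :
        Prod.mk (a, b) ⁻¹' {q | x < (tandemOverlaps t q).1 ∧ y < (tandemOverlaps t q).2} = ∅ := by
      ext ⟨c, d⟩
      simpa [hab] using hmem c d
    rw [hempty, measure_empty, indicator_of_notMem (show (a, b) ∉ Ioi (t + x) ×ˢ Ioi x from hab)]

lemma setLIntegral_Ioi_setLIntegral_Ioi_exp_neg_abs_sub {μ t x y : ℝ} (hμ : 0 < μ) (ht : 0 ≤ t)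
    (hx : 0 ≤ x) :
    ∫⁻ a in Ioi (t + x), ∫⁻ b in Ioi x,
        ENNReal.ofReal (exp (-(μ * (|a - (t + b)| + 2 * y)))) ∂expMeasure μ ∂expMeasure μ
      = ENNReal.ofReal (exp (-(μ * t))) * ENNReal.ofReal (exp (-(2 * μ * (x + y))) / 2) := by
  have := isProbabilityMeasure_expMeasure hμ
  set E := expMeasure μ
  have hshift : ∀ a b, ENNReal.ofReal (exp (-(μ * (|a + (t + x) - (t + (b + x))| + 2 * y))))
      = ENNReal.ofReal (exp (-(2 * μ * y))) * ENNReal.ofReal (exp (-(μ * |a - b|))) := by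
    intro a b
    rw [← ENNReal.ofReal_mul (exp_nonneg _), ← exp_add]
    ring_nf
  calc ∫⁻ a in Ioi (t + x), ∫⁻ b in Ioi x,
        ENNReal.ofReal (exp (-(μ * (|a - (t + b)| + 2 * y)))) ∂E ∂E
      = ∫⁻ a in Ioi (t + x), ENNReal.ofReal (exp (-(μ * x)))
          * ∫⁻ b, ENNReal.ofReal (exp (-(μ * (|a - (t + (b + x))| + 2 * y)))) ∂E ∂E :=
        lintegral_congr fun a => setLIntegral_Ioi_expMeasure μ hx (by fun_prop)
    _ = ENNReal.ofReal (exp (-(μ * (t + x)))) * ∫⁻ a, ENNReal.ofReal (exp (-(μ * x)))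
          * ∫⁻ b, ENNReal.ofReal (exp (-(μ * (|a + (t + x) - (t + (b + x))| + 2 * y)))) ∂E ∂E :=
        setLIntegral_Ioi_expMeasure μ (by positivity) (by fun_prop)
    _ = ENNReal.ofReal (exp (-(μ * (t + x)))) * (ENNReal.ofReal (exp (-(μ * x)))
          * (ENNReal.ofReal (exp (-(2 * μ * y))) * 2⁻¹)) := by
        simp_rw [hshift, lintegral_const_mul' _ _ ENNReal.ofReal_ne_top]
        rw [lintegral_lintegral_exp_neg_abs_sub_expMeasure hμ]
    _ = ENNReal.ofReal (exp (-(μ * t))) * ENNReal.ofReal (exp (-(2 * μ * (x + y))) / 2) := by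
        have hexp : exp (-(μ * (t + x))) * exp (-(μ * x)) * exp (-(2 * μ * y))
            = exp (-(μ * t)) * exp (-(2 * μ * (x + y))) := by
          simp only [← exp_add]
          ring_nf
        rw [← ENNReal.ofReal_ofNat 2, ← ENNReal.ofReal_inv_of_pos two_pos,
          ← ENNReal.ofReal_mul (exp_nonneg _), ← ENNReal.ofReal_mul (exp_nonneg _),
          ← ENNReal.ofReal_mul (exp_nonneg _), ← ENNReal.ofReal_mul (exp_nonneg _)]
        congr 1
        linear_combination hexp / 2

lemma expMeasure_prod_tandemOverlaps_tail {μ t x y : ℝ} (hμ : 0 < μ) (ht : 0 ≤ t) (hx : 0 ≤ x)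
    (hy : 0 ≤ y) :
    (((expMeasure μ).prod (expMeasure μ)).prod ((expMeasure μ).prod (expMeasure μ)))
        {q | x < (tandemOverlaps t q).1 ∧ y < (tandemOverlaps t q).2}
      = ENNReal.ofReal (exp (-(μ * t))) * ENNReal.ofReal (exp (-(2 * μ * (x + y))) / 2) := by
  have := isProbabilityMeasure_expMeasure hμ
  have hS : MeasurableSet {q | x < (tandemOverlaps t q).1 ∧ y < (tandemOverlaps t q).2} :=
    measurable_prodMk_left (measurableSet_tandemOverlaps_tail x y)
  rw [Measure.prod_apply hS,
    lintegral_congr (expMeasure_prod_preimage_tandemOverlaps hμ ht hx hy),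
    lintegral_indicator (measurableSet_Ioi.prod measurableSet_Ioi), ← Measure.prod_restrict,
    lintegral_prod _ (by fun_prop)]
  exact setLIntegral_Ioi_setLIntegral_Ioi_exp_neg_abs_sub hμ ht hx

lemma arrivalTime_add (τ : ℕ → Ω → ℝ) (n k : ℕ) (ω : Ω) :
    arrivalTime τ (n + k) ω = arrivalTime τ n ω + ∑ i : Fin k, τ (n + i) ω := by
  rw [arrivalTime, arrivalTime, Finset.sum_range_add, Finset.sum_range fun i => τ (n + i) ω]

lemma ovl_eq_tandemOverlaps (τ S1 S2 : ℕ → Ω → ℝ) (n k : ℕ) (ω : Ω) :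
    (ovl1 τ S1 n (n + k) ω, ovl2 τ S1 S2 n (n + k) ω)
      = tandemOverlaps (∑ i : Fin k, τ (n + i) ω)
          ((S1 n ω, S1 (n + k) ω), (S2 n ω, S2 (n + k) ω)) := by
  have h₁ : ovl1 τ S1 n (n + k) ω = overlapLength (arrivalTime τ n ω) (dep1 τ S1 n ω)
      (arrivalTime τ (n + k) ω) (dep1 τ S1 (n + k) ω) := rfl
  have h₂ : ovl2 τ S1 S2 n (n + k) ω = overlapLength (dep1 τ S1 n ω) (dep2 τ S1 S2 n ω)
      (dep1 τ S1 (n + k) ω) (dep2 τ S1 S2 (n + k) ω) := rfl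
  simp only [h₁, h₂, dep2, dep1, arrivalTime_add, tandemOverlaps, Prod.mk.injEq]
  constructor <;> refine Eq.trans ?_ (overlapLength_add_left (arrivalTime τ n ω) _ _ _ _) <;>
    congr 1 <;> ring

lemma hasLaw_interarrivals_services [MeasurableSpace Ω] (P : Measure Ω)
    {lam mu : ℝ} (hlam : 0 < lam) (hmu : 0 < mu) (τ S1 S2 : ℕ → Ω → ℝ)
    (hindep : iIndepFun (Sum.elim τ (Sum.elim S1 S2) : ℕ ⊕ (ℕ ⊕ ℕ) → Ω → ℝ) P)
    (hτ : ∀ i, P.map (τ i) = expMeasure lam) (hS1 : ∀ i, P.map (S1 i) = expMeasure mu)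
    (hS2 : ∀ i, P.map (S2 i) = expMeasure mu) (n : ℕ) {k : ℕ} (hk : 1 ≤ k) :
    HasLaw (fun ω => ((fun i : Fin k => τ (n + i) ω),
        ((S1 n ω, S1 (n + k) ω), (S2 n ω, S2 (n + k) ω))))
      ((Measure.pi fun _ : Fin k => expMeasure lam).prod
        (((expMeasure mu).prod (expMeasure mu)).prod ((expMeasure mu).prod (expMeasure mu))))
      P := by
  have hpair : Function.Injective ![n, n + k] := by
    intro i j h
    fin_cases i <;> fin_cases j <;> simp_all
  let e : Fin k ⊕ (Fin 2 ⊕ Fin 2) → ℕ ⊕ (ℕ ⊕ ℕ) :=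
    Sum.map (fun i => n + i) (Sum.map ![n, n + k] ![n, n + k])
  have he : Function.Injective e := Sum.map_injective.2
    ⟨fun i j h => Fin.ext (by simpa using h), Sum.map_injective.2 ⟨hpair, hpair⟩⟩
  let ν : Fin k ⊕ (Fin 2 ⊕ Fin 2) → Measure ℝ :=
    Sum.elim (fun _ => expMeasure lam) (fun _ => expMeasure mu)
  have hν : ∀ j, IsProbabilityMeasure (ν j) := by
    rintro (_ | _) <;> exact isProbabilityMeasure_expMeasure (by assumption)
  have hexp : ∀ {X : Ω → ℝ} {c : ℝ}, 0 < c → P.map X = expMeasure c → HasLaw X (expMeasure c) P :=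
    fun hc h => ⟨.of_map_ne_zero (h ▸ (isProbabilityMeasure_expMeasure hc).ne_zero), h⟩
  have hlaw : ∀ j, HasLaw (Sum.elim τ (Sum.elim S1 S2) (e j)) (ν j) P := by
    rintro (i | i | i)
    · exact hexp hlam (hτ _)
    · exact hexp hmu (hS1 _)
    · exact hexp hmu (hS2 _)
  have hΦ := ((MeasurePreserving.id _).prod (((measurePreserving_piFinTwo _).prod
    (measurePreserving_piFinTwo _)).comp (measurePreserving_sumPiEquivProdPi _))).comp
    (measurePreserving_sumPiEquivProdPi ν)
  exact hΦ.comp_hasLaw ((hindep.precomp he).hasLaw_pi hlaw)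

theorem tandem_joint_tail_general [MeasurableSpace Ω] (P : Measure Ω)
    (lam mu : ℝ) (hlam : 0 < lam) (hmu : 0 < mu)
    (τ S1 S2 : ℕ → Ω → ℝ)
    (hindep : iIndepFun
      (Sum.elim τ (Sum.elim S1 S2) : ℕ ⊕ (ℕ ⊕ ℕ) → Ω → ℝ) P)
    (hτ : ∀ i, P.map (τ i) = expMeasure lam)
    (hS1 : ∀ i, P.map (S1 i) = expMeasure mu)
    (hS2 : ∀ i, P.map (S2 i) = expMeasure mu)
    (n k : ℕ) (hk : 1 ≤ k) (x y : ℝ) (hx : 0 ≤ x) (hy : 0 ≤ y) :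
    P {ω | x < ovl1 τ S1 n (n + k) ω ∧ y < ovl2 τ S1 S2 n (n + k) ω} =
      ENNReal.ofReal (Real.exp (-(2 * mu * (x + y))) / 2 * (lam / (lam + mu)) ^ k) := by
  have := isProbabilityMeasure_expMeasure hlam
  have := isProbabilityMeasure_expMeasure hmu
  have hlaw := hasLaw_interarrivals_services P hlam hmu τ S1 S2 hindep hτ hS1 hS2 n hk
  let B : Set ((Fin k → ℝ) × (ℝ × ℝ) × (ℝ × ℝ)) :=
    {p | x < (tandemOverlaps (∑ i, p.1 i) p.2).1 ∧ y < (tandemOverlaps (∑ i, p.1 i) p.2).2}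
  have hB : MeasurableSet B :=
    measurableSet_tandemOverlaps_tail x y |>.preimage <|
      (Finset.measurable_sum Finset.univ fun i _ => measurable_pi_apply i).prodMap measurable_id
  have hevent : {ω | x < ovl1 τ S1 n (n + k) ω ∧ y < ovl2 τ S1 S2 n (n + k) ω}
      = (fun ω => ((fun i : Fin k => τ (n + i) ω),
          ((S1 n ω, S1 (n + k) ω), (S2 n ω, S2 (n + k) ω)))) ⁻¹' B := by
    ext ω
    simp only [mem_ofPred_eq, mem_preimage, B, ← ovl_eq_tandemOverlaps]
  have hslice : ∀ᵐ w ∂Measure.pi (fun _ : Fin k => expMeasure lam),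
      (((expMeasure mu).prod (expMeasure mu)).prod ((expMeasure mu).prod (expMeasure mu)))
        (Prod.mk w ⁻¹' B)
      = ENNReal.ofReal (exp (-(mu * ∑ i, w i))) * ENNReal.ofReal (exp (-(2 * mu * (x + y))) / 2) :=
    (ae_sum_nonneg_pi_expMeasure hlam).mono fun w hw =>
      expMeasure_prod_tandemOverlaps_tail hmu hw hx hy
  rw [hevent, ← Measure.map_apply_of_aemeasurable hlaw.aemeasurable hB, hlaw.map_eq,
    Measure.prod_apply hB, lintegral_congr_ae hslice,
    lintegral_mul_const' _ _ ENNReal.ofReal_ne_top,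
    lintegral_exp_neg_mul_sum_pi_expMeasure hlam hmu.le, Fintype.card_fin,
    ← ENNReal.ofReal_pow (by positivity), ← ENNReal.ofReal_mul (by positivity), mul_comm]

theorem tandem_joint_tail [MeasurableSpace Ω] (P : Measure Ω) [IsProbabilityMeasure P]
    (lam mu : ℝ) (hlam : 0 < lam) (hmu : 0 < mu)
    (τ S1 S2 : ℕ → Ω → ℝ)
    (hindep : iIndepFun
      (Sum.elim τ (Sum.elim S1 S2) : ℕ ⊕ (ℕ ⊕ ℕ) → Ω → ℝ) P)
    (hτ : ∀ i, P.map (τ i) = expMeasure lam)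
    (hS1 : ∀ i, P.map (S1 i) = expMeasure mu)
    (hS2 : ∀ i, P.map (S2 i) = expMeasure mu)
    (n k : ℕ) (hk : 1 ≤ k) (x y : ℝ) (hx : 0 ≤ x) (hy : 0 ≤ y) :
    P {ω | x < ovl1 τ S1 n (n + k) ω ∧ y < ovl2 τ S1 S2 n (n + k) ω} =
      ENNReal.ofReal (Real.exp (-(2 * mu * (x + y))) / 2 * (lam / (lam + mu)) ^ k) :=
  tandem_joint_tail_general P lam mu hlam hmu τ S1 S2 hindep hτ hS1 hS2 n k hk x y hx hy
end

section
/- Let $\lambda, \mu > 0$ and let $j, k$ be positive integers. Define $M = \frac{\lambda^{j+k} z_1^{j-1} z_2^{k-1}}{\Gamma(j)\Gamma(k)}$. Then for all $x, y \geq 0$, $\int_{\mathbb{R}_+^8} \mathbf{1}\{z_3 > x + z_1\}\mathbf{1}\{z_4 > x\}\mathbf{1}\{z_8 > y\}\mathbf{1}\{z_5 + z_6 - z_2 - z_7 > y\}\mathbf{1}\{z_7 + z_2 > z_5\}\, \mu^6 e^{-\mu(z_3+z_4+z_5+z_6+z_7+z_8)}\, M\, e^{-\lambda(z_1+z_2)}\,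 dz = \frac{1}{4}e^{-2\mu(x+y)}\left(\frac{\lambda}{\lambda+\mu}\right)^{j+k}\left(1 + \frac{2\mu k}{\lambda+\mu}\right)$. -/
/-!
The integrand factors into a constant, the exponential tails `expTail mu y z8` and
`expTail mu x z4`, a factor in `(z1, z3)` carried by the first customer pair and a factor in
`(z2, z5, z6, z7)` carried by the second. For the first pair, integrating the service time `z3`
before the gap `z1` leaves a Gamma integral at rate `λ + μ`. For the second pair the inner order
`z6, z5, z2` is reversed (Fubini, the integrand being dominated by a product of exponentials).
Then `z6` contributes `e^{-μ (y + z2 + 2 z7)} / μ` on `z5 < z2 + z7`, `z5` the length `z2 + z7`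
of that interval, and `z2`, `z7` are again Gamma integrals.
-/

open MeasureTheory Real Set Function
open scoped Nat

noncomputable def expTail (a c z : ℝ) : ℝ := if c < z then exp (-(a * z)) else 0

@[fun_prop]
lemma Measurable.expTail {α : Type*} [MeasurableSpace α] {c z : α → ℝ} (hc : Measurable c)
    (hz : Measurable z) (a : ℝ) : Measurable fun p => expTail a (c p) (z p) :=
  Measurable.ite (measurableSet_lt hc hz) (by fun_prop) measurable_const

@[fun_prop]
lemma Measurable.ite_lt {α : Type*} [MeasurableSpace α] {f g h : α → ℝ} (hf : Measurable f)
    (hg : Measurable g) (hh : Measurable h) : Measurable fun p => if f p < g p then h p else 0 :=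
  Measurable.ite (measurableSet_lt hf hg) hh measurable_const

section ExponentialIntegrals

variable {a : ℝ}

lemma integrableOn_exp_neg_mul (ha : 0 < a) (c : ℝ) :
    IntegrableOn (fun z => exp (-(a * z))) (Ioi c) := by
  simpa [neg_mul] using exp_neg_integrableOn_Ioi c ha

lemma integrableOn_pow_mul_exp_neg_mul (ha : 0 < a) (n : ℕ) :
    IntegrableOn (fun z => z ^ n * exp (-(a * z))) (Ioi 0) := by
  simpa [neg_mul] using integrableOn_rpow_mul_exp_neg_mul_rpow (s := n) (p := 1)
    (by linarith [n.cast_nonneg (α := ℝ)]) one_pos ha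

lemma integral_pow_mul_exp_neg_mul (ha : 0 < a) (n : ℕ) :
    ∫ z in Ioi 0, z ^ n * exp (-(a * z)) = n ! / a ^ (n + 1) := by
  have h := integral_rpow_mul_exp_neg_mul_Ioi (a := n + 1) (by positivity) ha
  simp only [add_sub_cancel_right, rpow_natCast, Gamma_nat_eq_factorial] at h
  rw [h, ← Nat.cast_add_one, rpow_natCast, one_div, inv_pow, inv_mul_eq_div]

lemma integral_pow_mul_exp_neg_mul_mul_add (ha : 0 < a) (n : ℕ) (p q : ℝ) :
    ∫ z in Ioi 0, z ^ n * exp (-(a * z)) * (p * z + q) =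
      p * ((n + 1)! / a ^ (n + 2)) + q * (n ! / a ^ (n + 1)) := by
  have h : ∀ z : ℝ, z ^ n * exp (-(a * z)) * (p * z + q) =
      p * (z ^ (n + 1) * exp (-(a * z))) + q * (z ^ n * exp (-(a * z))) := fun z => by ring
  simp_rw [h]
  rw [integral_add ((integrableOn_pow_mul_exp_neg_mul ha _).const_mul p)
    ((integrableOn_pow_mul_exp_neg_mul ha _).const_mul q), integral_const_mul, integral_const_mul,
    integral_pow_mul_exp_neg_mul ha, integral_pow_mul_exp_neg_mul ha]

lemma integral_ite_lt_const {b : ℝ} (hb : 0 ≤ b) (C : ℝ) :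
    ∫ z in Ioi 0, (if z < b then C else 0) = b * C := by
  have h : (fun z : ℝ => if z < b then C else 0) = (Iio b).indicator fun _ => C := by
    ext z; simp [indicator_apply]
  rw [h, integral_indicator measurableSet_Iio, Measure.restrict_restrict measurableSet_Iio,
    Iio_inter_Ioi, setIntegral_const, Real.volume_real_Ioo_of_le hb, sub_zero, smul_eq_mul]

lemma norm_expTail_le (c z : ℝ) : ‖expTail a c z‖ ≤ exp (-(a * z)) := by
  unfold expTail
  split_ifs <;> simp [(exp_pos _).le]

lemma integral_expTail (ha : 0 < a) {c : ℝ} (hc : 0 ≤ c) :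
    ∫ z in Ioi 0, expTail a c z = exp (-(a * c)) / a := by
  have h : expTail a c = (Ioi c).indicator fun z => exp (-(a * z)) := by
    ext z; simp [expTail, indicator_apply]
  rw [h, integral_indicator measurableSet_Ioi, Measure.restrict_restrict measurableSet_Ioi,
    Ioi_inter_Ioi, sup_eq_left.mpr hc]
  simpa [neg_mul, div_neg, neg_div] using integral_exp_mul_Ioi (neg_lt_zero.mpr ha) c

end ExponentialIntegrals

section Swap

variable {α β γ E : Type*} [MeasurableSpace α] [MeasurableSpace β] [MeasurableSpace γ]
  {μ : Measure α} {ν : Measure β} {ρ : Measure γ} [SFinite μ] [SFinite ν] [SFinite ρ]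
  [NormedAddCommGroup E] [NormedSpace ℝ E]

theorem integral_integral_swap_of_norm_le_mul {f : α → β → E} {g : α → ℝ} {h : β → ℝ}
    (hf : AEStronglyMeasurable (uncurry f) (μ.prod ν)) (hg : Integrable g μ)
    (hh : Integrable h ν) (hfgh : ∀ a b, ‖f a b‖ ≤ g a * h b) :
    ∫ a, ∫ b, f a b ∂ν ∂μ = ∫ b, ∫ a, f a b ∂μ ∂ν :=
  integral_integral_swap <| (hg.mul_prod hh).mono' hf <| .of_forall fun p => hfgh p.1 p.2

theorem integral_integral_integral_reverse {f : α → β → γ → E} {g₁ : α → ℝ} {g₂ : β → ℝ}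
    {g₃ : γ → ℝ} (hf : StronglyMeasurable fun p : α × β × γ => f p.1 p.2.1 p.2.2)
    (hg₁ : Integrable g₁ μ) (hg₂ : Integrable g₂ ν) (hg₃ : Integrable g₃ ρ)
    (hfg : ∀ a b c, ‖f a b c‖ ≤ g₁ a * g₂ b * g₃ c) :
    ∫ a, ∫ b, ∫ c, f a b c ∂ρ ∂ν ∂μ = ∫ c, ∫ b, ∫ a, f a b c ∂μ ∂ν ∂ρ := by
  have hbc : ∀ a, ∫ b, ∫ c, f a b c ∂ρ ∂ν = ∫ c, ∫ b, f a b c ∂ν ∂ρ := fun a =>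
    integral_integral_swap_of_norm_le_mul
      (hf.comp_measurable
        (by fun_prop : Measurable fun q : β × γ => (a, q.1, q.2))).aestronglyMeasurable
      (hg₂.const_mul (g₁ a)) hg₃ fun b c => hfg a b c
  have hab : ∀ c, ∫ a, ∫ b, f a b c ∂ν ∂μ = ∫ b, ∫ a, f a b c ∂μ ∂ν := fun c =>
    integral_integral_swap_of_norm_le_mul
      (hf.comp_measurable
        (by fun_prop : Measurable fun q : α × β => (q.1, q.2, c))).aestronglyMeasurable
      hg₁ (hg₂.mul_const (g₃ c)) fun a b => (hfg a b c).trans_eq (mul_assoc _ _ _)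
  have hac : ∫ a, ∫ c, ∫ b, f a b c ∂ν ∂ρ ∂μ = ∫ c, ∫ a, ∫ b, f a b c ∂ν ∂μ ∂ρ := by
    refine integral_integral_swap_of_norm_le_mul (g := fun a => g₁ a * ∫ b, g₂ b ∂ν) (h := g₃)
      ?_ (hg₁.mul_const _) hg₃ fun a c => ?_
    · exact ((hf.comp_measurable (by fun_prop : Measurable fun q : (α × γ) × β =>
        (q.1.1, q.2, q.1.2))).integral_prod_right' (ν := ν)).aestronglyMeasurable
    · calc ‖∫ b, f a b c ∂ν‖ ≤ ∫ b, g₁ a * g₂ b * g₃ c ∂ν :=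
            norm_integral_le_of_norm_le ((hg₂.const_mul _).mul_const _) (.of_forall (hfg a · c))
        _ = g₁ a * (∫ b, g₂ b ∂ν) * g₃ c := by rw [integral_mul_const, integral_const_mul]
  simp only [hbc]
  rw [hac]
  simp only [hab]

end Swap

section Pairs

variable {lam mu : ℝ}

lemma integral_firstPair (hlam : 0 < lam) (hmu : 0 < mu) {x : ℝ} (hx : 0 ≤ x) (n : ℕ) :
    ∫ z3 in Ioi 0, ∫ z1 in Ioi 0, z1 ^ n * exp (-(lam * z1)) * expTail mu (x + z1) z3 =
      exp (-(mu * x)) / mu * (n ! / (lam + mu) ^ (n + 1)) := by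
  rw [integral_integral_swap_of_norm_le_mul (Measurable.aestronglyMeasurable (by fun_prop))
    (integrableOn_exp_neg_mul hmu 0) (integrableOn_pow_mul_exp_neg_mul hlam n).norm
    fun z3 z1 => by
      rw [norm_mul, mul_comm]
      exact mul_le_mul_of_nonneg_right (norm_expTail_le _ _) (norm_nonneg _)]
  calc ∫ z1 in Ioi 0, ∫ z3 in Ioi 0, z1 ^ n * exp (-(lam * z1)) * expTail mu (x + z1) z3
      = ∫ z1 in Ioi 0, exp (-(mu * x)) / mu * (z1 ^ n * exp (-((lam + mu) * z1))) := by
        refine setIntegral_congr_fun measurableSet_Ioi fun z1 hz1 => ?_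
        have he : exp (-(lam * z1)) * exp (-(mu * (x + z1))) =
            exp (-(mu * x)) * exp (-((lam + mu) * z1)) := by
          rw [← exp_add, ← exp_add]; ring_nf
        rw [integral_const_mul, integral_expTail hmu (by linarith [mem_Ioi.mp hz1])]
        linear_combination z1 ^ n / mu * he
    _ = exp (-(mu * x)) / mu * (n ! / (lam + mu) ^ (n + 1)) := by
        rw [integral_const_mul, integral_pow_mul_exp_neg_mul (by linarith)]

lemma integral_ite_mul_expTail (hmu : 0 < mu) {y : ℝ} (hy : 0 ≤ y) (b u : ℝ) :
    ∫ v in Ioi 0, (if u < b then exp (-(mu * u)) else 0) * expTail mu (y + b - u) v =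
      if u < b then exp (-(mu * (y + b))) / mu else 0 := by
  rw [integral_const_mul]
  split_ifs
  · rw [integral_expTail hmu (by linarith), ← mul_div_assoc, ← exp_add]
    ring_nf
  · exact zero_mul _

lemma norm_secondPair_le (y : ℝ) (n : ℕ) (z2 z5 z6 z7 : ℝ) :
    ‖z2 ^ n * exp (-(lam * z2)) * exp (-(mu * z7)) *
        ((if z5 < z2 + z7 then exp (-(mu * z5)) else 0) * expTail mu (y + (z2 + z7) - z5) z6)‖ ≤
      exp (-(mu * z6)) * exp (-(mu * z5)) * (‖z2 ^ n * exp (-(lam * z2))‖ * exp (-(mu * z7))) := by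
  have hite : ‖if z5 < z2 + z7 then exp (-(mu * z5)) else 0‖ ≤ exp (-(mu * z5)) := by
    split_ifs <;> simp [(exp_pos _).le]
  calc _ = ‖z2 ^ n * exp (-(lam * z2))‖ * exp (-(mu * z7)) *
        (‖if z5 < z2 + z7 then exp (-(mu * z5)) else 0‖ *
          ‖expTail mu (y + (z2 + z7) - z5) z6‖) := by
        simp only [norm_mul, norm_of_nonneg (exp_pos _).le]
    _ ≤ ‖z2 ^ n * exp (-(lam * z2))‖ * exp (-(mu * z7)) *
        (exp (-(mu * z5)) * exp (-(mu * z6))) := by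
        gcongr
        exact norm_expTail_le _ _
    _ = _ := by ring

lemma integral_secondPair (hlam : 0 < lam) (hmu : 0 < mu) {y : ℝ} (hy : 0 ≤ y) (n : ℕ) :
    ∫ z7 in Ioi 0, ∫ z6 in Ioi 0, ∫ z5 in Ioi 0, ∫ z2 in Ioi 0,
      z2 ^ n * exp (-(lam * z2)) * exp (-(mu * z7)) *
        ((if z5 < z2 + z7 then exp (-(mu * z5)) else 0) * expTail mu (y + (z2 + z7) - z5) z6) =
      exp (-(mu * y)) / mu *
        (n ! / (lam + mu) ^ (n + 1) / (4 * mu ^ 2) +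
          (n + 1)! / (lam + mu) ^ (n + 2) / (2 * mu)) := by
  have hexp := integrableOn_exp_neg_mul hmu 0
  calc _ = ∫ z7 in Ioi 0, ∫ z2 in Ioi 0, ∫ z5 in Ioi 0, ∫ z6 in Ioi 0,
      z2 ^ n * exp (-(lam * z2)) * exp (-(mu * z7)) *
        ((if z5 < z2 + z7 then exp (-(mu * z5)) else 0) * expTail mu (y + (z2 + z7) - z5) z6) := by
        refine setIntegral_congr_fun measurableSet_Ioi fun z7 _ => ?_
        exact integral_integral_integral_reverse (Measurable.stronglyMeasurable (by fun_prop))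
          hexp hexp ((integrableOn_pow_mul_exp_neg_mul hlam n).norm.mul_const (exp (-(mu * z7))))
          fun z6 z5 z2 => norm_secondPair_le y n z2 z5 z6 z7
    _ = ∫ z7 in Ioi 0, ∫ z2 in Ioi 0, z2 ^ n * exp (-(lam * z2)) * exp (-(mu * z7)) *
          ((z2 + z7) * (exp (-(mu * (y + (z2 + z7)))) / mu)) := by
        refine setIntegral_congr_fun measurableSet_Ioi fun z7 hz7 => ?_
        refine setIntegral_congr_fun measurableSet_Ioi fun z2 hz2 => ?_
        have hb : 0 ≤ z2 + z7 := by linarith [mem_Ioi.mp hz7, mem_Ioi.mp hz2]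
        simp only [integral_const_mul, integral_ite_mul_expTail hmu hy, integral_ite_lt_const hb]
    _ = ∫ z7 in Ioi 0, exp (-(mu * (y + 2 * z7))) / mu *
          (1 * ((n + 1)! / (lam + mu) ^ (n + 2)) + z7 * (n ! / (lam + mu) ^ (n + 1))) := by
        refine setIntegral_congr_fun measurableSet_Ioi fun z7 _ => ?_
        rw [← integral_pow_mul_exp_neg_mul_mul_add (by linarith), ← integral_const_mul]
        refine setIntegral_congr_fun measurableSet_Ioi fun z2 _ => ?_
        have he : exp (-(lam * z2)) * exp (-(mu * z7)) * exp (-(mu * (y + (z2 + z7)))) =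
            exp (-(mu * (y + 2 * z7))) * exp (-((lam + mu) * z2)) := by
          rw [← exp_add, ← exp_add, ← exp_add]; ring_nf
        linear_combination z2 ^ n * (z2 + z7) / mu * he
    _ = exp (-(mu * y)) / mu * ∫ z7 in Ioi 0, z7 ^ 0 * exp (-(2 * mu * z7)) *
          (n ! / (lam + mu) ^ (n + 1) * z7 + 1 * ((n + 1)! / (lam + mu) ^ (n + 2))) := by
        rw [← integral_const_mul]
        refine integral_congr_ae (.of_forall fun z7 => ?_)
        have he : exp (-(mu * (y + 2 * z7))) = exp (-(mu * y)) * exp (-(2 * mu * z7)) := by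
          rw [← exp_add]; ring_nf
        simp only [he]
        ring
    _ = _ := by
        rw [integral_pow_mul_exp_neg_mul_mul_add (by positivity)]
        field_simp
        ring

end Pairs

lemma disjointPairs_integrand_eq_mul (lam mu x y : ℝ) (j k : ℕ) (z1 z2 z3 z4 z5 z6 z7 z8 : ℝ) :
    (if z3 > x + z1 ∧ z4 > x ∧ z8 > y ∧ z5 + z6 - z2 - z7 > y ∧ z7 + z2 > z5 then
            mu ^ 6 * Real.exp (-(mu * (z3 + z4 + z5 + z6 + z7 + z8))) *
              (lam ^ (j + k) * z1 ^ (j - 1) * z2 ^ (k - 1) /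
                (Real.Gamma j * Real.Gamma k)) *
              Real.exp (-(lam * (z1 + z2)))
          else 0) =
      mu ^ 6 * lam ^ (j + k) / (Gamma j * Gamma k) * expTail mu y z8 * expTail mu x z4 *
        (z2 ^ (k - 1) * exp (-(lam * z2)) * exp (-(mu * z7)) *
          ((if z5 < z2 + z7 then exp (-(mu * z5)) else 0) * expTail mu (y + (z2 + z7) - z5) z6)) *
        (z1 ^ (j - 1) * exp (-(lam * z1)) * expTail mu (x + z1) z3) := by
  have hB : y < z5 + z6 - z2 - z7 ↔ y + (z2 + z7) - z5 < z6 := by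
    constructor <;> intro <;> linarith
  simp only [expTail, gt_iff_lt, hB, add_comm z7 z2]
  by_cases h3 : x + z1 < z3 <;> by_cases h4 : x < z4 <;> by_cases h8 : y < z8 <;>
    by_cases h6 : y + (z2 + z7) - z5 < z6 <;> by_cases h5 : z5 < z2 + z7 <;>
    simp only [h3, h4, h8, h5, h6, if_true, if_false, mul_zero, zero_mul, and_true, and_false,
      and_self]
  simp only [mul_add, neg_add, exp_add]
  ring

theorem disjoint_pairs_first_term (lam mu : ℝ) (hlam : 0 < lam) (hmu : 0 < mu)
    (j k : ℕ) (hj : 1 ≤ j) (hk : 1 ≤ k) (x y : ℝ) (hx : 0 ≤ x) (hy : 0 ≤ y) :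
    (∫ z8 in Set.Ioi (0:ℝ), ∫ z7 in Set.Ioi (0:ℝ), ∫ z6 in Set.Ioi (0:ℝ),
      ∫ z5 in Set.Ioi (0:ℝ), ∫ z4 in Set.Ioi (0:ℝ), ∫ z3 in Set.Ioi (0:ℝ),
        ∫ z2 in Set.Ioi (0:ℝ), ∫ z1 in Set.Ioi (0:ℝ),
          (if z3 > x + z1 ∧ z4 > x ∧ z8 > y ∧ z5 + z6 - z2 - z7 > y ∧ z7 + z2 > z5 then
            mu ^ 6 * Real.exp (-(mu * (z3 + z4 + z5 + z6 + z7 + z8))) *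
              (lam ^ (j + k) * z1 ^ (j - 1) * z2 ^ (k - 1) /
                (Real.Gamma j * Real.Gamma k)) *
              Real.exp (-(lam * (z1 + z2)))
          else 0)) =
      1 / 4 * Real.exp (-(2 * mu * (x + y))) * (lam / (lam + mu)) ^ (j + k) *
        (1 + 2 * mu * k / (lam + mu)) := by
  obtain ⟨m, rfl⟩ := Nat.exists_eq_add_of_le' hj
  obtain ⟨n, rfl⟩ := Nat.exists_eq_add_of_le' hk
  simp only [disjointPairs_integrand_eq_mul, integral_const_mul, integral_mul_const]
  simp only [Nat.add_sub_cancel]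
  rw [integral_expTail hmu hy, integral_expTail hmu hx, integral_secondPair hlam hmu hy,
    integral_firstPair hlam hmu hx]
  push_cast
  have hexp : exp (-(2 * mu * (x + y))) =
      exp (-(mu * x)) * exp (-(mu * x)) * exp (-(mu * y)) * exp (-(mu * y)) := by
    simp only [← exp_add]; ring_nf
  have hlm : lam + mu ≠ 0 := by positivity
  rw [Gamma_nat_eq_factorial, Gamma_nat_eq_factorial, Nat.factorial_succ, hexp, div_pow]
  push_cast
  field_simp
  ring
end
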